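/- arXiv:1804.10203 — 3 statements merged into one kernel-verified Lean document; each statement's English description precedes it below -/
import Mathlib

section
/- If p is a complex polynomial of degree n having no zero in the open unit disk {z : |z| < 1}, then max_{|z|=1} |p'(z)| ≤ (n/2) · max_{|z|=1} |p(z)|. -/
open Polynomial Metric

noncomputable def polyMaxOn (p : Polynomial ℂ) (r : ℝ) : ℝ :=
  sSup ((fun z => ‖p.eval z‖) '' sphere (0 : ℂ) r)

/-! If every root `r` of `p` satisfies `|z| ≤ |r|`, then `Re (z / (z - r)) ≤ 1/2`, and summing over
the roots gives `Re (z p'(z) / p(z)) ≤ n/2`, i.e. `|z p'(z)| ≤ |n p(z) - z p'(z)|`. Let `M` be the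
maximum of `|p|` on the unit circle. For `|c| > nM` the polynomial `p - c/n` has no zero in the open
unit disk by the maximum modulus principle, so on the circle `|p'(z)| ≤ |n p(z) - z p'(z) - c|`.
Letting `c` point along `n p(z) - z p'(z)` with `|c| ↓ nM` gives
`|p'(z)| + |n p(z) - z p'(z)| ≤ nM`, and the first inequality turns this into `2 |p'(z)| ≤ nM`. -/

theorem Complex.re_div_sub_le_half {z r : ℂ} (h : ‖z‖ ≤ ‖r‖) : (z / (z - r)).re ≤ 1 / 2 := by
  rcases eq_or_ne z r with rfl | hne
  · simp
  have hpos : 0 < Complex.normSq (z - r) := Complex.normSq_pos.mpr (sub_ne_zero.mpr hne)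
  have hsq : Complex.normSq z ≤ Complex.normSq r := by
    simpa only [← Complex.sq_norm] using pow_le_pow_left₀ (norm_nonneg z) h 2
  rw [Complex.div_re, ← add_div, div_le_iff₀ hpos]
  simp only [Complex.normSq_apply, Complex.sub_re, Complex.sub_im] at hsq ⊢
  nlinarith

theorem Complex.norm_le_norm_sub_of_re_le_half {w : ℂ} {a : ℝ} (ha : 0 ≤ a) (hw : w.re ≤ a / 2) :
    ‖w‖ ≤ ‖(a : ℂ) - w‖ := by
  refine (sq_le_sq₀ (norm_nonneg _) (norm_nonneg _)).mp ?_
  simp only [Complex.sq_norm, Complex.normSq_apply, Complex.sub_re, Complex.sub_im,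
    Complex.ofReal_re, Complex.ofReal_im]
  nlinarith

namespace Polynomial

theorem re_mul_eval_derivative_div_eval_le {P : ℂ[X]} {z : ℂ}
    (hroots : ∀ w, P.eval w = 0 → ‖z‖ ≤ ‖w‖) :
    (z * P.derivative.eval z / P.eval z).re ≤ P.natDegree / 2 := by
  rcases eq_or_ne (P.eval z) 0 with hPz | hPz
  · simpa [hPz] using by positivity
  have hsplit := IsAlgClosed.splits P
  have hterm : ∀ x ∈ P.roots.map fun w => (z / (z - w)).re, x ≤ 1 / 2 := by
    simp only [Multiset.mem_map]
    rintro _ ⟨w, hw, rfl⟩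
    exact Complex.re_div_sub_le_half (hroots w (isRoot_of_mem_roots hw))
  calc (z * P.derivative.eval z / P.eval z).re
      = (P.roots.map fun w => (z / (z - w)).re).sum := by
        rw [mul_div_assoc, hsplit.eval_derivative_div_eval_of_ne_zero hPz,
          ← Multiset.sum_map_mul_left, ← Complex.coe_reAddGroupHom, map_multiset_sum,
          Multiset.map_map]
        simp only [Function.comp_def, mul_one_div, Complex.coe_reAddGroupHom]
    _ ≤ (P.roots.map fun w => (z / (z - w)).re).card • (1 / 2 : ℝ) :=
        Multiset.sum_le_card_nsmul _ _ hterm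
    _ = P.natDegree / 2 := by
        rw [Multiset.card_map, ← hsplit.natDegree_eq_card_roots, nsmul_eq_mul]
        ring

theorem norm_mul_eval_derivative_le {P : ℂ[X]} {z : ℂ}
    (hroots : ∀ w, P.eval w = 0 → ‖z‖ ≤ ‖w‖) :
    ‖z * P.derivative.eval z‖ ≤ ‖P.natDegree * P.eval z - z * P.derivative.eval z‖ := by
  rcases eq_or_ne (P.eval z) 0 with hPz | hPz
  · simp [hPz]
  rw [← div_mul_cancel₀ (z * P.derivative.eval z) hPz, ← sub_mul, norm_mul, norm_mul]
  gcongr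
  exact_mod_cast Complex.norm_le_norm_sub_of_re_le_half (Nat.cast_nonneg _)
    (re_mul_eval_derivative_div_eval_le hroots)

end Polynomial

theorem polyMaxOn_nonneg (p : ℂ[X]) (r : ℝ) : 0 ≤ polyMaxOn p r :=
  Real.sSup_nonneg (by rintro _ ⟨z, -, rfl⟩; exact norm_nonneg _)

theorem norm_eval_le_polyMaxOn (p : ℂ[X]) {r : ℝ} (hr : 0 < r) {w : ℂ} (hw : ‖w‖ ≤ r) :
    ‖p.eval w‖ ≤ polyMaxOn p r := by
  have hbdd : BddAbove ((fun z => ‖p.eval z‖) '' sphere (0 : ℂ) r) :=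
    ((isCompact_sphere 0 r).image p.continuous.norm).bddAbove
  refine Complex.norm_le_of_forall_mem_frontier_norm_le (U := ball 0 r) isBounded_ball
    p.differentiable.diffContOnCl (fun z hz => ?_) (z := w) ?_
  · rw [frontier_ball 0 hr.ne'] at hz
    exact le_csSup hbdd ⟨z, hz, rfl⟩
  · rwa [closure_ball 0 hr.ne', mem_closedBall_zero_iff]

theorem norm_add_norm_le_of_forall_norm_le_norm_sub {E : Type*} [NormedAddCommGroup E]
    [NormedSpace ℝ E] [Nontrivial E] {a b : E} {R : ℝ} (hb : ‖b‖ ≤ R)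
    (h : ∀ c : E, R < ‖c‖ → ‖a‖ ≤ ‖b - c‖) : ‖a‖ + ‖b‖ ≤ R := by
  obtain ⟨u, hu, hbu⟩ : ∃ u : E, ‖u‖ = 1 ∧ ‖b‖ • u = b := by
    rcases eq_or_ne b 0 with rfl | hb0
    · obtain ⟨u, hu⟩ := exists_norm_eq E zero_le_one
      exact ⟨u, hu, by simp⟩
    · exact ⟨‖b‖⁻¹ • b, norm_smul_inv_norm hb0, smul_inv_smul₀ (norm_ne_zero_iff.mpr hb0) b⟩
  refine le_of_forall_gt_imp_ge_of_dense fun s hs => ?_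
  have hbs : ‖b‖ < s := hb.trans_lt hs
  have hs0 : 0 ≤ s := (norm_nonneg b).trans hbs.le
  have hsu := h (s • u) (by rwa [norm_smul, hu, mul_one, Real.norm_of_nonneg hs0])
  rw [← hbu, ← sub_smul, norm_smul, hu, mul_one, Real.norm_of_nonpos (by linarith)] at hsu
  linarith

namespace Polynomial

theorem norm_eval_derivative_le_norm_sub {p : ℂ[X]} (hp : 0 < p.natDegree) {z : ℂ} (hz : ‖z‖ = 1)
    {c : ℂ} (hc : p.natDegree * polyMaxOn p 1 < ‖c‖) :
    ‖p.derivative.eval z‖ ≤ ‖p.natDegree * p.eval z - z * p.derivative.eval z - c‖ := by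
  have hn : (p.natDegree : ℂ) ≠ 0 := by exact_mod_cast hp.ne'
  set P := p - C (c / p.natDegree)
  have hroots : ∀ w, P.eval w = 0 → ‖z‖ ≤ ‖w‖ := by
    intro w hw
    rw [hz]
    by_contra! hw1
    have hpw : p.eval w = c / p.natDegree := by simpa [P, sub_eq_zero] using hw
    have hle := norm_eval_le_polyMaxOn p one_pos hw1.le
    rw [hpw, norm_div, Complex.norm_natCast, div_le_iff₀ (by exact_mod_cast hp)] at hle
    linarith
  have h := norm_mul_eval_derivative_le hroots
  rw [natDegree_sub_C, derivative_sub, derivative_C, sub_zero, norm_mul, hz, one_mul] at h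
  convert h using 2
  simp only [P, eval_sub, eval_C]
  rw [mul_sub, mul_div_cancel₀ c hn]
  ring

theorem two_mul_norm_eval_derivative_le {p : ℂ[X]} (hp : 0 < p.natDegree)
    (hroots : ∀ w, p.eval w = 0 → 1 ≤ ‖w‖) {z : ℂ} (hz : ‖z‖ = 1) :
    2 * ‖p.derivative.eval z‖ ≤ p.natDegree * polyMaxOn p 1 := by
  set A := p.derivative.eval z
  set B := p.natDegree * p.eval z - z * A
  have hAB : ‖A‖ ≤ ‖B‖ := by
    simpa [norm_mul, hz] using norm_mul_eval_derivative_le (z := z) (hz ▸ hroots)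
  have hshift : ∀ c : ℂ, p.natDegree * polyMaxOn p 1 < ‖c‖ → ‖A‖ ≤ ‖B - c‖ :=
    fun c hc => norm_eval_derivative_le_norm_sub hp hz hc
  rcases le_or_gt ‖B‖ (p.natDegree * polyMaxOn p 1) with hB | hB
  · linarith [norm_add_norm_le_of_forall_norm_le_norm_sub hB hshift]
  · have hA : ‖A‖ ≤ 0 := by simpa using hshift B hB
    have := mul_nonneg (Nat.cast_nonneg (α := ℝ) p.natDegree) (polyMaxOn_nonneg p 1)
    linarith

end Polynomial

theorem erdos_lax (p : Polynomial ℂ) (n : ℕ) (hn : 1 ≤ n) (hdeg : p.natDegree = n)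
    (hz : ∀ z : ℂ, p.eval z = 0 → 1 ≤ ‖z‖) :
    polyMaxOn (derivative p) 1 ≤ (n / 2 : ℝ) * polyMaxOn p 1 := by
  subst hdeg
  refine Real.sSup_le ?_ (mul_nonneg (by positivity) (polyMaxOn_nonneg p 1))
  rintro _ ⟨z, hz1, rfl⟩
  have := two_mul_norm_eval_derivative_le hn hz (mem_sphere_zero_iff_norm.mp hz1)
  linarith
end

section
/- If p is a complex polynomial of degree n with all its zeros in the closed unit disk, then max_{|z|=1} |p'(z)| ≥ (n/2) · [max_{|z|=1} |p(z)| + min_{|z|=1} |p(z)|]. -/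
open Polynomial Metric

noncomputable def polyMinOn (p : Polynomial ℂ) (r : ℝ) : ℝ :=
  sInf ((fun z => ‖p.eval z‖) '' sphere (0 : ℂ) r)

/-!
For `‖z‖ = 1` and a zero `a` of `p` with `‖a‖ ≤ 1` one has `re (z / (z - a)) ≥ 1/2`; summing over
the zeros gives `re (z p'(z) / p(z)) ≥ n / 2`, i.e. `‖n p(z) - z p'(z)‖ ≤ ‖p'(z)‖`.

Let `m` be the minimum of `‖p‖` on the unit circle. The minimum modulus principle for the reversed
polynomial gives `‖p(z)‖ ≥ m ‖z‖ⁿ` for `‖z‖ ≥ 1`, so for `‖b‖ < m` the polynomial `p + b Xⁿ` still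
has degree `n` and its zeros in the unit disk. The added term cancels in `n F - z F'`, so this
inequality for `F = p + b Xⁿ` reads `‖n p(z) - z p'(z)‖ ≤ ‖p'(z) + c‖` for every `‖c‖ < n m`;
taking `c` opposite to `p'(z)` gives `‖n p(z) - z p'(z)‖ + n m ≤ ‖p'(z)‖`. Together with
`n ‖p(z)‖ ≤ ‖n p(z) - z p'(z)‖ + ‖p'(z)‖` at a point where `‖p‖` is maximal, this is the claim.
-/

namespace Complex

theorem le_norm_of_forall_mem_frontier_le_norm {E : Type*} [NormedAddCommGroup E]
    [NormedSpace ℂ E] [Nontrivial E] {f : E → ℂ} {U : Set E} (hU : Bornology.IsBounded U)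
    (hd : DiffContOnCl ℂ f U) (hf : ∀ z ∈ closure U, f z ≠ 0) {m : ℝ}
    (hm : ∀ z ∈ frontier U, m ≤ ‖f z‖) {z : E} (hz : z ∈ closure U) : m ≤ ‖f z‖ := by
  rcases le_or_gt m 0 with hm0 | hm0
  · exact hm0.trans (norm_nonneg _)
  have hinv : ‖(f z)⁻¹‖ ≤ m⁻¹ :=
    norm_le_of_forall_mem_frontier_norm_le hU (hd.inv hf)
      (fun w hw => by simpa only [Pi.inv_apply, norm_inv] using inv_anti₀ hm0 (hm w hw)) hz
  rwa [norm_inv, inv_le_inv₀ (norm_pos_iff.mpr (hf z hz)) hm0] at hinv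

theorem half_le_re_div_sub {z a : ℂ} (hz : ‖z‖ = 1) (ha : ‖a‖ ≤ 1)
    (hza : z ≠ a) : 1 / 2 ≤ (z / (z - a)).re := by
  have hns : 0 < normSq (z - a) := normSq_pos.mpr (sub_ne_zero.mpr hza)
  have hz2 : normSq z = 1 := by rw [← Complex.sq_norm, hz, one_pow]
  have ha2 : normSq a ≤ 1 := by rw [← Complex.sq_norm]; nlinarith [norm_nonneg a]
  rw [div_re, ← add_div, le_div_iff₀ hns]
  simp only [normSq_apply, sub_re, sub_im] at *
  nlinarith

theorem norm_ofReal_sub_le_norm {r : ℝ} {w : ℂ} (hr : 0 ≤ r) (h : r ≤ 2 * w.re) :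
    ‖(r : ℂ) - w‖ ≤ ‖w‖ := by
  rw [norm_def, norm_def]
  gcongr
  simp only [normSq_apply, sub_re, sub_im, ofReal_re, ofReal_im]
  nlinarith

end Complex

theorem add_le_norm_of_forall_le_norm_add {E : Type*} [NormedAddCommGroup E]
    [NormedSpace ℝ E] {a r : ℝ} {u : E} (hr : 0 < r) (h : ∀ c : E, ‖c‖ < r → a ≤ ‖u + c‖)
    (hru : r ≤ ‖u‖) : a + r ≤ ‖u‖ := by
  have hu : 0 < ‖u‖ := hr.trans_le hru
  suffices ∀ s, 0 ≤ s → s < r → a ≤ ‖u‖ - s by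
    rw [← le_sub_iff_add_le']
    refine le_of_forall_lt_imp_le_of_dense fun s hs => ?_
    have := this (max s 0) (le_max_right _ _) (max_lt hs hr)
    linarith [le_max_left s 0]
  intro s hs0 hsr
  have hc : u + -((s / ‖u‖) • u) = (1 - s / ‖u‖) • u := by
    rw [sub_smul, one_smul, sub_eq_add_neg]
  have := h (-((s / ‖u‖) • u)) (by
    rwa [norm_neg, norm_smul, Real.norm_of_nonneg (by positivity), div_mul_cancel₀ _ hu.ne'])
  rwa [hc, norm_smul, Real.norm_of_nonneg (by rw [sub_nonneg, div_le_one hu]; linarith),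
    sub_mul, one_mul, div_mul_cancel₀ _ hu.ne'] at this

namespace Polynomial

theorem eval_reverse_inv_mul_pow {K : Type*} [Field K] (p : K[X]) {x : K} (hx : x ≠ 0) :
    p.reverse.eval x⁻¹ * x ^ p.natDegree = p.eval x := by
  let := invertibleOfNonzero hx
  simpa only [eval₂_id, invOf_eq_inv] using eval₂_reverse_mul_pow (RingHom.id K) x p

theorem natDegree_add_C_mul_X_pow_natDegree {R : Type*} [Semiring R] {p : R[X]} {b : R}
    (hb : p.leadingCoeff + b ≠ 0) : (p + C b * X ^ p.natDegree).natDegree = p.natDegree := by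
  refine le_antisymm (natDegree_add_le_of_degree_le le_rfl (natDegree_C_mul_X_pow_le _ _)) ?_
  refine le_natDegree_of_ne_zero ?_
  rwa [coeff_add, coeff_C_mul_X_pow, if_pos rfl, coeff_natDegree]

variable {p : ℂ[X]}

theorem natDegree_le_two_mul_re_mul_eval_derivative_div_eval
    (hp : ∀ a, p.eval a = 0 → ‖a‖ ≤ 1) {z : ℂ} (hz : ‖z‖ = 1) (hpz : p.eval z ≠ 0) :
    (p.natDegree : ℝ) ≤ 2 * (z * (p.derivative.eval z / p.eval z)).re := by
  have hsum :
      z * (p.derivative.eval z / p.eval z) = (p.roots.map fun a ↦ z / (z - a)).sum := by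
    rw [(IsAlgClosed.splits p).eval_derivative_div_eval_of_ne_zero hpz,
      ← Multiset.sum_map_mul_left]
    simp only [mul_one_div]
  have hre : (z * (p.derivative.eval z / p.eval z)).re
      = (p.roots.map fun a ↦ (z / (z - a)).re).sum := by
    rw [hsum, ← Complex.coe_reAddGroupHom, map_multiset_sum, Multiset.map_map]
    rfl
  have hhalf : ∀ x ∈ p.roots.map fun a ↦ (z / (z - a)).re, 1 / 2 ≤ x := by
    simp only [Multiset.mem_map, forall_exists_index, and_imp, forall_apply_eq_imp_iff₂]
    intro a ha
    have ha0 : p.eval a = 0 := (mem_roots'.mp ha).2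
    exact Complex.half_le_re_div_sub hz (hp a ha0) (fun h => hpz (h ▸ ha0))
  have := Multiset.card_nsmul_le_sum hhalf
  rw [Multiset.card_map, IsAlgClosed.card_roots_eq_natDegree, nsmul_eq_mul] at this
  linarith

theorem norm_natDegree_mul_eval_sub_mul_eval_derivative_le
    (hp : ∀ a, p.eval a = 0 → ‖a‖ ≤ 1) {z : ℂ} (hz : ‖z‖ = 1) :
    ‖(p.natDegree : ℂ) * p.eval z - z * p.derivative.eval z‖ ≤ ‖p.derivative.eval z‖ := by
  by_cases hpz : p.eval z = 0
  · simp [hpz, hz]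
  set w := z * (p.derivative.eval z / p.eval z)
  have hw : ‖(p.natDegree : ℂ) - w‖ ≤ ‖w‖ := by
    simpa only [Complex.ofReal_natCast] using
      Complex.norm_ofReal_sub_le_norm (Nat.cast_nonneg _)
        (natDegree_le_two_mul_re_mul_eval_derivative_div_eval hp hz hpz)
  calc ‖(p.natDegree : ℂ) * p.eval z - z * p.derivative.eval z‖
      = ‖(p.natDegree : ℂ) - w‖ * ‖p.eval z‖ := by
        rw [← norm_mul]; congr 1; simp only [w]; field_simp
    _ ≤ ‖w‖ * ‖p.eval z‖ := by gcongr
    _ = ‖p.derivative.eval z‖ := by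
        simp only [w, norm_mul, norm_div, hz, one_mul]
        exact div_mul_cancel₀ _ (norm_ne_zero_iff.mpr hpz)

theorem le_norm_eval_reverse {m : ℝ}
    (hp : ∀ a, p.eval a = 0 → ‖a‖ ≤ 1)
    (hm : ∀ z, ‖z‖ = 1 → m ≤ ‖p.eval z‖) {w : ℂ} (hw : ‖w‖ ≤ 1) :
    m ≤ ‖p.reverse.eval w‖ := by
  rcases le_or_gt m 0 with hm0 | hm0
  · exact hm0.trans (norm_nonneg _)
  have hp0 : p ≠ 0 := fun h => by simpa [h] using hp 2
  have hpinv : ∀ x, x ≠ 0 → p.reverse.eval x * x⁻¹ ^ p.natDegree = p.eval x⁻¹ :=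
    fun x hx => by rw [← eval_reverse_inv_mul_pow p (inv_ne_zero hx), inv_inv]
  have hne : ∀ x ∈ closure (ball (0 : ℂ) 1), p.reverse.eval x ≠ 0 := by
    intro x hx hx0
    rw [closure_ball 0 one_ne_zero, mem_closedBall_zero_iff] at hx
    rcases eq_or_ne x 0 with rfl | hx'
    · rw [← coeff_zero_eq_eval_zero, coeff_zero_reverse, leadingCoeff_eq_zero] at hx0
      exact hp0 hx0
    have hpx : p.eval x⁻¹ = 0 := by rw [← hpinv x hx', hx0, zero_mul]
    have hx1 : ‖x⁻¹‖ = 1 := by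
      have h := hp _ hpx
      rw [norm_inv, inv_le_one₀ (norm_pos_iff.mpr hx')] at h
      rw [norm_inv, le_antisymm hx h, inv_one]
    simpa [hpx, hm0.not_ge] using hm x⁻¹ hx1
  refine Complex.le_norm_of_forall_mem_frontier_le_norm isBounded_ball
    (p.reverse.differentiable.diffContOnCl) hne (fun x hx => ?_)
    (by rwa [closure_ball 0 one_ne_zero, mem_closedBall_zero_iff])
  rw [frontier_ball 0 one_ne_zero, mem_sphere_zero_iff_norm] at hx
  have hx0 : x ≠ 0 := norm_ne_zero_iff.mp (hx ▸ one_ne_zero)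
  calc m ≤ ‖p.eval x⁻¹‖ := hm _ (by rw [norm_inv, hx, inv_one])
    _ = ‖p.reverse.eval x‖ := by
      rw [← hpinv x hx0, norm_mul, norm_pow, norm_inv, hx, inv_one, one_pow, mul_one]

theorem eval_add_C_mul_X_pow_natDegree_ne_zero {b : ℂ}
    (hb : ∀ w : ℂ, ‖w‖ ≤ 1 → ‖b‖ < ‖p.reverse.eval w‖) {z : ℂ} (hz : 1 ≤ ‖z‖) :
    (p + C b * X ^ p.natDegree).eval z ≠ 0 := by
  have hz0 : z ≠ 0 := norm_pos_iff.mp (one_pos.trans_le hz)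
  have hzinv : ‖z⁻¹‖ ≤ 1 := by rw [norm_inv]; exact inv_le_one_of_one_le₀ hz
  rw [eval_add, ← eval_reverse_inv_mul_pow p hz0]
  simp only [eval_mul, eval_C, eval_pow, eval_X, ← add_mul]
  refine mul_ne_zero (fun h => ?_) (pow_ne_zero _ hz0)
  have := hb _ hzinv
  rw [eq_neg_of_add_eq_zero_left h, norm_neg] at this
  exact this.false

theorem natDegree_add_C_mul_X_pow_natDegree_of_norm_lt {b : ℂ}
    (hb : ∀ w : ℂ, ‖w‖ ≤ 1 → ‖b‖ < ‖p.reverse.eval w‖) :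
    (p + C b * X ^ p.natDegree).natDegree = p.natDegree := by
  refine natDegree_add_C_mul_X_pow_natDegree fun h => ?_
  have := hb 0 (by simp)
  rw [← coeff_zero_eq_eval_zero, coeff_zero_reverse, eq_neg_of_add_eq_zero_left h,
    norm_neg] at this
  exact this.false

theorem norm_natDegree_mul_eval_sub_le_norm_eval_derivative_add {m : ℝ}
    (hp : ∀ a, p.eval a = 0 → ‖a‖ ≤ 1) (hm : ∀ z, ‖z‖ = 1 → m ≤ ‖p.eval z‖)
    {z : ℂ} (hz : ‖z‖ = 1) {c : ℂ} (hc : ‖c‖ < p.natDegree * m) :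
    ‖(p.natDegree : ℂ) * p.eval z - z * p.derivative.eval z‖ ≤ ‖p.derivative.eval z + c‖ := by
  set n := p.natDegree
  have hn : 0 < n := by
    by_contra! h
    simp [Nat.le_zero.mp h] at hc
    linarith [norm_nonneg c]
  have hn' : (n : ℂ) ≠ 0 := by exact_mod_cast hn.ne'
  have hz0 : z ≠ 0 := norm_ne_zero_iff.mp (hz ▸ one_ne_zero)
  set b := c / (n * z ^ (n - 1))
  have hb : ∀ w : ℂ, ‖w‖ ≤ 1 → ‖b‖ < ‖p.reverse.eval w‖ := by
    intro w hw
    refine lt_of_lt_of_le ?_ (le_norm_eval_reverse hp hm hw)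
    simp only [b, norm_div, norm_mul, norm_pow, hz, one_pow, mul_one, Complex.norm_natCast]
    rwa [div_lt_iff₀ (by exact_mod_cast hn), mul_comm]
  set F := p + C b * X ^ n
  have hF := norm_natDegree_mul_eval_sub_mul_eval_derivative_le (p := F)
    (fun a ha => not_lt.mp fun h => eval_add_C_mul_X_pow_natDegree_ne_zero hb h.le ha) hz
  have hzn : z * z ^ (n - 1) = z ^ n := by rw [← pow_succ', Nat.sub_add_cancel hn]
  have hFz : F.eval z = p.eval z + b * z ^ n := by simp [F]
  have hF'z : F.derivative.eval z = p.derivative.eval z + c := by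
    simp only [F, b, derivative_add, derivative_C_mul_X_pow, eval_add, eval_mul, eval_C,
      eval_pow, eval_X]
    field_simp
  have hzc : z * c = n * (b * z ^ n) := by
    simp only [b]
    rw [← hzn]
    field_simp
  rw [natDegree_add_C_mul_X_pow_natDegree_of_norm_lt hb, hFz, hF'z] at hF
  convert hF using 2
  linear_combination hzc

theorem natDegree_div_two_mul_add_le_norm_eval_derivative {m : ℝ}
    (hp : ∀ a, p.eval a = 0 → ‖a‖ ≤ 1) (hm : ∀ z, ‖z‖ = 1 → m ≤ ‖p.eval z‖)
    {z : ℂ} (hz : ‖z‖ = 1) :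
    (p.natDegree : ℝ) / 2 * (‖p.eval z‖ + m) ≤ ‖p.derivative.eval z‖ := by
  set n := p.natDegree
  set u := p.derivative.eval z
  have hgap : ‖(n : ℂ) * p.eval z - z * u‖ + n * m ≤ ‖u‖ := by
    rcases le_or_gt ((n : ℝ) * m) 0 with hnm | hnm
    · linarith [norm_natDegree_mul_eval_sub_mul_eval_derivative_le hp hz]
    have hc : ∀ c : ℂ, ‖c‖ < n * m → ‖(n : ℂ) * p.eval z - z * u‖ ≤ ‖u + c‖ :=
      fun _ hc => norm_natDegree_mul_eval_sub_le_norm_eval_derivative_add hp hm hz hc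
    refine add_le_norm_of_forall_le_norm_add hnm hc (le_of_not_gt fun hu => ?_)
    have hpz : (n : ℂ) * p.eval z = z * u := by
      simpa [sub_eq_zero] using hc (-u) (by rwa [norm_neg])
    have : n * ‖p.eval z‖ = ‖u‖ := by simpa [hz] using congrArg norm hpz
    nlinarith [hm z hz]
  have htri : n * ‖p.eval z‖ ≤ ‖(n : ℂ) * p.eval z - z * u‖ + ‖u‖ := by
    simpa [hz] using norm_le_norm_sub_add ((n : ℂ) * p.eval z) (z * u)
  linarith

end Polynomial

theorem polyMinOn_le {p : ℂ[X]} {r : ℝ} {z : ℂ} (hz : ‖z‖ = r) :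
    polyMinOn p r ≤ ‖p.eval z‖ :=
  csInf_le ⟨0, by rintro _ ⟨w, -, rfl⟩; exact norm_nonneg _⟩
    ⟨z, mem_sphere_zero_iff_norm.mpr hz, rfl⟩

theorem le_polyMaxOn (p : ℂ[X]) {r : ℝ} {z : ℂ} (hz : ‖z‖ = r) :
    ‖p.eval z‖ ≤ polyMaxOn p r :=
  le_csSup ((isCompact_sphere 0 r).image p.continuous.norm).bddAbove
    ⟨z, mem_sphere_zero_iff_norm.mpr hz, rfl⟩

theorem exists_polyMaxOn_eq (p : ℂ[X]) {r : ℝ} (hr : 0 ≤ r) :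
    ∃ z : ℂ, ‖z‖ = r ∧ polyMaxOn p r = ‖p.eval z‖ := by
  obtain ⟨z, hz, h⟩ := ((isCompact_sphere 0 r).image p.continuous.norm).sSup_mem
    ((NormedSpace.sphere_nonempty.mpr hr).image _)
  exact ⟨z, mem_sphere_zero_iff_norm.mp hz, h.symm⟩

theorem aziz_dawood_lower_general (p : Polynomial ℂ) (n : ℕ) (hdeg : p.natDegree = n)
    (hz : ∀ z : ℂ, p.eval z = 0 → ‖z‖ ≤ 1) :
    (n / 2 : ℝ) * (polyMaxOn p 1 + polyMinOn p 1) ≤ polyMaxOn (derivative p) 1 := by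
  obtain ⟨z, hz1, hmax⟩ := exists_polyMaxOn_eq p zero_le_one
  rw [hmax, ← hdeg]
  exact (natDegree_div_two_mul_add_le_norm_eval_derivative hz (fun _ hw => polyMinOn_le hw)
    hz1).trans (le_polyMaxOn _ hz1)

theorem aziz_dawood_lower (p : Polynomial ℂ) (n : ℕ) (hn : 1 ≤ n) (hdeg : p.natDegree = n)
    (hz : ∀ z : ℂ, p.eval z = 0 → ‖z‖ ≤ 1) :
    (n / 2 : ℝ) * (polyMaxOn p 1 + polyMinOn p 1) ≤ polyMaxOn (derivative p) 1 :=
  aziz_dawood_lower_general p n hdeg hz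
end

section
/- For the polynomial p(z) = z^s (z + k)^{n−s} with positive integers s < n, real k ≥ 1, and real α ≥ 1, the maximum of the polar derivative satisfies max_{|z|=1} |D_α p(z)| = ((n−s)k + αn + αsk)(1+k)^{n−s−1}. -/
open Metric

/-!
Write `n = s + m`. Since `deg p = n`, the `z²`-terms of `n p + (α - z) p'` cancel and
`D_α p(z) = z^(s-1) (z + k)^(m-1) (A z + B)` with `A = m k + α n ≥ 0` and `B = α s k ≥ 0`.
On `|z| = 1` the triangle inequality bounds `|z + k|^(m-1) |A z + B|` by `(1 + k)^(m-1) (A + B)`,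
and `z = 1` attains this bound.
-/

section PolarDeriv

variable {𝕜 : Type*} [NontriviallyNormedField 𝕜]

/-- `D_α p` of the paper, where `n` is the degree of `p`. -/
noncomputable def polarDeriv (n : ℕ) (α : 𝕜) (p : 𝕜 → 𝕜) (z : 𝕜) : 𝕜 :=
  n * p z + (α - z) * deriv p z

theorem deriv_pow_mul_add_pow (s m : ℕ) (c z : 𝕜) :
    deriv (fun z => z ^ (s + 1) * (z + c) ^ (m + 1)) z =
      (s + 1) * z ^ s * (z + c) ^ (m + 1) + (m + 1) * z ^ (s + 1) * (z + c) ^ m := by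
  have hz := hasDerivAt_pow (s + 1) z
  have hzc := ((hasDerivAt_id' z).add_const c).fun_pow (m + 1)
  rw [(hz.fun_mul hzc).deriv]
  simp only [Nat.add_sub_cancel, mul_one]
  push_cast
  ring

theorem polarDeriv_pow_mul_add_pow (s m : ℕ) (α c z : 𝕜) :
    polarDeriv (s + 1 + (m + 1)) α (fun z => z ^ (s + 1) * (z + c) ^ (m + 1)) z =
      z ^ s * (z + c) ^ m *
        (((m + 1) * c + α * (s + 1 + (m + 1))) * z + α * (s + 1) * c) := by
  rw [polarDeriv, deriv_pow_mul_add_pow]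
  push_cast
  ring

end PolarDeriv

theorem isGreatest_norm_add_pow_mul_norm_sphere (m : ℕ) {a b c : ℝ}
    (ha : 0 ≤ a) (hb : 0 ≤ b) (hc : 0 ≤ c) :
    IsGreatest ((fun z : ℂ => ‖z + c‖ ^ m * ‖a * z + b‖) '' sphere 0 1)
      ((1 + c) ^ m * (a + b)) := by
  refine ⟨⟨1, by simp, ?_⟩, ?_⟩
  · have h1c : (1 : ℂ) + c = ((1 + c : ℝ) : ℂ) := by push_cast; ring
    have hab : (a : ℂ) * 1 + b = ((a + b : ℝ) : ℂ) := by push_cast; ring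
    simp only [h1c, hab, Complex.norm_of_nonneg (by linarith : 0 ≤ 1 + c),
      Complex.norm_of_nonneg (add_nonneg ha hb)]
  · rintro _ ⟨z, hz, rfl⟩
    have hz1 : ‖z‖ = 1 := by simpa using hz
    have hzc : ‖z + c‖ ≤ 1 + c := by
      calc ‖z + c‖ ≤ ‖z‖ + ‖(c : ℂ)‖ := norm_add_le _ _
        _ = 1 + c := by rw [hz1, Complex.norm_of_nonneg hc]
    have hazb : ‖a * z + b‖ ≤ a + b := by
      calc ‖a * z + b‖ ≤ ‖(a : ℂ) * z‖ + ‖(b : ℂ)‖ := norm_add_le _ _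
        _ = a + b := by rw [norm_mul, hz1, Complex.norm_of_nonneg ha,
          Complex.norm_of_nonneg hb, mul_one]
    exact mul_le_mul (pow_le_pow_left₀ (norm_nonneg _) hzc m) hazb (norm_nonneg _)
      (by positivity)

theorem sharpness_theorem3 (n s : ℕ) (hs : 0 < s) (hsn : s < n)
    (k α : ℝ) (hk : 1 ≤ k) (hα : 1 ≤ α)
    (p : ℂ → ℂ) (hp : p = fun z => z ^ s * (z + (k : ℂ)) ^ (n - s)) :
    sSup ((fun z =>
        ‖(n : ℂ) * p z + ((α : ℂ) - z) * deriv p z‖) '' sphere (0 : ℂ) 1) =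
      ((n - s : ℝ) * k + α * n + α * s * k) * (1 + k) ^ (n - s - 1) := by
  obtain ⟨s, rfl⟩ : ∃ t, s = t + 1 := ⟨s - 1, by omega⟩
  obtain ⟨m, rfl⟩ : ∃ m, n = s + 1 + (m + 1) := ⟨n - s - 2, by omega⟩
  rw [Nat.add_sub_cancel_left] at hp ⊢
  subst hp
  set A : ℝ := (m + 1) * k + α * (s + 1 + (m + 1))
  set B : ℝ := α * (s + 1) * k
  have hnorm : ∀ z ∈ sphere (0 : ℂ) 1,
      ‖polarDeriv (s + 1 + (m + 1)) (α : ℂ) (fun z => z ^ (s + 1) * (z + k) ^ (m + 1)) z‖ =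
        ‖z + k‖ ^ m * ‖A * z + B‖ := by
    intro z hz
    have hz1 : ‖z‖ = 1 := by simpa using hz
    rw [polarDeriv_pow_mul_add_pow, norm_mul, norm_mul, norm_pow, norm_pow, hz1, one_pow,
      one_mul]
    congr 2
    push_cast [A, B]
    ring
  have hmax := isGreatest_norm_add_pow_mul_norm_sphere m (a := A) (b := B) (c := k)
    (by positivity) (by positivity) (by linarith)
  change sSup ((fun z => ‖polarDeriv (s + 1 + (m + 1)) (α : ℂ)
    (fun z => z ^ (s + 1) * (z + k) ^ (m + 1)) z‖) '' sphere (0 : ℂ) 1) = _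
  rw [Set.image_congr hnorm, hmax.csSup_eq, Nat.add_sub_cancel]
  push_cast [A, B]
  ring
end
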